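/- For each EM iterate x^{(k)}, the expected value of the constrained backprojected residual satisfies Σ_{j=1}^M (x^{(k)}_j)² ( H₂ᵀ (1/(Hx^{(k)})) )_j ≤ Σ_{i=1}^N y_i. -/
import Mathlib


/-- EM (Richardson–Lucy) iteration step, componentwise. -/
noncomputable def emStep {N M : ℕ} (H : Matrix (Fin N) (Fin M) ℝ) (y : Fin N → ℝ)
    (x : Fin M → ℝ) : Fin M → ℝ :=
  fun j => x j / (H.transpose.mulVec (fun _ => 1) j) *
    H.transpose.mulVec (fun i => y i / H.mulVec x i) j

lemma emStep_pos {N M : ℕ} [Nonempty (Fin N)] [Nonempty (Fin M)]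
    (H : Matrix (Fin N) (Fin M) ℝ) (hH : ∀ i j, 0 < H i j)
    (y : Fin N → ℝ) (hy : ∀ i, 0 < y i) (x : Fin M → ℝ) (hx : ∀ j, 0 < x j)
    (j : Fin M) : 0 < emStep H y x j := by
  have h2 : ∀ i, 0 < H.mulVec x i := fun i =>
    Finset.sum_pos (fun j _ => mul_pos (hH i j) (hx j)) Finset.univ_nonempty
  have h1 : 0 < H.transpose.mulVec (fun _ => 1) j := by
    simp only [Matrix.mulVec, dotProduct, Matrix.transpose_apply, mul_one]
    exact Finset.sum_pos (fun i _ => hH i j) Finset.univ_nonempty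
  have h3 : 0 < H.transpose.mulVec (fun i => y i / H.mulVec x i) j := by
    simp only [Matrix.mulVec, dotProduct, Matrix.transpose_apply]
    exact Finset.sum_pos (fun i _ => mul_pos (hH i j) (div_pos (hy i) (h2 i)))
      Finset.univ_nonempty
  exact mul_pos (div_pos (hx j) h1) h3

lemma em_flux {N M : ℕ} [Nonempty (Fin N)] [Nonempty (Fin M)]
    (H : Matrix (Fin N) (Fin M) ℝ) (hH : ∀ i j, 0 < H i j)
    (y : Fin N → ℝ) (x : Fin M → ℝ) (hx : ∀ j, 0 < x j) :
    ∑ i, H.mulVec (emStep H y x) i = ∑ i, y i := by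
  have h2 : ∀ i, 0 < H.mulVec x i := fun i =>
    Finset.sum_pos (fun j _ => mul_pos (hH i j) (hx j)) Finset.univ_nonempty
  have hS : ∀ j : Fin M, (0:ℝ) < ∑ i, H i j := fun j =>
    Finset.sum_pos (fun i _ => hH i j) Finset.univ_nonempty
  simp only [Matrix.mulVec, dotProduct, emStep, Matrix.transpose_apply, mul_one]
  rw [Finset.sum_comm]
  have key : ∀ j : Fin M,
      ∑ i, H i j * (x j / (∑ i', H i' j) * ∑ i', H i' j * (y i' / (∑ j', H i' j' * x j'))) =
      ∑ i, x j * (H i j * (y i / (∑ j', H i j' * x j'))) := by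
    intro j
    rw [← Finset.sum_mul, ← Finset.mul_sum]
    have hSne : (∑ i : Fin N, H i j) ≠ 0 := (hS j).ne'
    field_simp
  calc ∑ j, ∑ i, H i j * (x j / (∑ i', H i' j) * ∑ i', H i' j * (y i' / (∑ j', H i' j' * x j')))
      = ∑ j, ∑ i, x j * (H i j * (y i / (∑ j', H i j' * x j'))) := by
        exact Finset.sum_congr rfl fun j _ => key j
    _ = ∑ i, (y i / (∑ j', H i j' * x j')) * ∑ j, H i j * x j := by
        rw [Finset.sum_comm]
        refine Finset.sum_congr rfl fun i _ => ?_
        rw [Finset.mul_sum]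
        refine Finset.sum_congr rfl fun j _ => ?_
        ring
    _ = ∑ i, y i := by
        refine Finset.sum_congr rfl fun i _ => ?_
        have := (h2 i)
        simp only [Matrix.mulVec, dotProduct] at this
        field_simp

theorem em_cbr_threshold_bound (N M : ℕ) (H : Matrix (Fin N) (Fin M) ℝ)
    (hH : ∀ i j, 0 < H i j) (y : Fin N → ℝ) (hy : ∀ i, 0 < y i)
    (x0 : Fin M → ℝ) (hx0 : ∀ j, 0 < x0 j)
    (xk : ℕ → Fin M → ℝ) (hxk0 : xk 0 = x0)
    (hxk : ∀ k, xk (k + 1) = emStep H y (xk k)) :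
    ∀ k, 1 ≤ k →
      ∑ j, (xk k j) ^ 2 * (∑ i, (H i j) ^ 2 * (1 / H.mulVec (xk k) i)) ≤
        ∑ i, y i := by
  intro k hk
  rcases isEmpty_or_nonempty (Fin N) with hN | hN
  · simp [Finset.univ_eq_empty]
  rcases isEmpty_or_nonempty (Fin M) with hM | hM
  · simp only [Finset.univ_eq_empty, Finset.sum_empty]
    exact Finset.sum_nonneg fun i _ => (hy i).le
  -- positivity of iterates
  have hpos : ∀ m j, 0 < xk m j := by
    intro m
    induction m with
    | zero => rw [hxk0]; exact hx0
    | succ n ih => rw [hxk]; exact emStep_pos H hH y hy (xk n) ih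
  set x := xk k with hx
  have hxp : ∀ j, 0 < x j := hpos k
  have h2 : ∀ i, 0 < H.mulVec x i := fun i =>
    Finset.sum_pos (fun j _ => mul_pos (hH i j) (hxp j)) Finset.univ_nonempty
  -- step A: LHS ≤ ∑ i, (Hx)_i
  have stepA : ∑ j, (x j) ^ 2 * (∑ i, (H i j) ^ 2 * (1 / H.mulVec x i)) ≤
      ∑ i, H.mulVec x i := by
    have : ∀ j, (x j) ^ 2 * (∑ i, (H i j) ^ 2 * (1 / H.mulVec x i)) =
        ∑ i, (H i j * x j) ^ 2 / H.mulVec x i := by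
      intro j
      rw [Finset.mul_sum]
      refine Finset.sum_congr rfl fun i _ => ?_
      field_simp
    rw [Finset.sum_congr rfl fun j _ => this j, Finset.sum_comm]
    have hHx_eq : ∀ i, H.mulVec x i = ∑ j, H i j * x j := fun i => rfl
    calc ∑ i, ∑ j, (H i j * x j) ^ 2 / H.mulVec x i
        ≤ ∑ i, ∑ j, H i j * x j := by
          refine Finset.sum_le_sum fun i _ => Finset.sum_le_sum fun j _ => ?_
          have hterm : H i j * x j ≤ H.mulVec x i := by
            rw [hHx_eq]
            exact Finset.single_le_sum (f := fun j => H i j * x j)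
              (fun j' _ => (mul_pos (hH i j') (hxp j')).le) (Finset.mem_univ j)
          rw [div_le_iff₀ (h2 i)]
          calc (H i j * x j) ^ 2 = (H i j * x j) * (H i j * x j) := sq (H i j * x j) ▸ (sq (H i j * x j)).symm ▸ by ring
            _ ≤ (H i j * x j) * H.mulVec x i :=
                mul_le_mul_of_nonneg_left hterm (mul_pos (hH i j) (hxp j)).le
      _ = ∑ i, H.mulVec x i := by
          refine Finset.sum_congr rfl fun i _ => (hHx_eq i).symm
  -- step B: flux conservation
  obtain ⟨m, rfl⟩ : ∃ m, k = m + 1 := ⟨k - 1, (Nat.succ_pred_eq_of_pos hk).symm⟩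
  have hflux : ∑ i, H.mulVec x i = ∑ i, y i := by
    rw [hx, hxk]
    exact em_flux H hH y (xk m) (hpos m)
  linarith [stepA]
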